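/- arXiv:2407.13457 — 2 statements merged into one kernel-verified Lean document; each statement's English description precedes it below -/
import Mathlib

section
/- Optimal coupling on ℓ_p spheres: For p > 0, let Ω = {x ∈ ℝⁿ : ∑_i |x_i|^p = 1} with the cone measure 𝐏 (law of G/‖G‖_p with G having i.i.d. coordinates of density ∝ e^{−|x|^p}), and metric dist(x,y) := ∑_i ||x_i|^p − |y_i|^p| + ∑_i 1_{x_i y_i < 0}. Then for all x, y ∈ Ω and A ⊆ [n], the conditional resampling kernel T_A = E[· | Z_{Aᶜ}] satisfies W_∞(T_A(x,·), T_A(y,·)) = ∑_{i∈Aᶜ} ||x_i|^p − |y_i|^p| + ∑_{i∈Aᶜ} 1_{x_i y_i < 0} + |∑_{i∈A}(|x_i|^p − |y_i|^p)|, and the same identity holds for W₁. In particular W_∞(T_A(x,·), T_A(y,·)) ≤ dist(x,y). -/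
open MeasureTheory ProbabilityTheory
open scoped BigOperators Classical

/-- The unnormalized measure with density `c · exp(-∑ᵢ |gᵢ|^p)` on `ℝⁿ`. -/
noncomputable def pGibbs (n : ℕ) (p c : ℝ) : Measure (Fin n → ℝ) :=
  (volume : Measure (Fin n → ℝ)).withDensity
    (fun g => ENNReal.ofReal (c * Real.exp (-∑ i, |g i| ^ p)))

/-- The cone measure on the `ℓ_p` sphere: the law of `G / ‖G‖_p` with `G` having i.i.d.
coordinates of density proportional to `e^{-|x|^p}`. -/
noncomputable def coneMeasure (n : ℕ) (p c : ℝ) : Measure (Fin n → ℝ) :=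
  (pGibbs n p c).map (fun g i => g i / (∑ j, |g j| ^ p) ^ (1 / p))

/-- The conditional resampling kernel `T_A(x,·)` on the `ℓ_p` sphere: the coordinates in
`A` are replaced by `(‖x_A‖_p/‖Z_A‖_p) Z_i` with `Z` drawn from the cone measure. -/
noncomputable def lpKernel (n : ℕ) (p c : ℝ) (A : Finset (Fin n)) (x : Fin n → ℝ) :
    Measure (Fin n → ℝ) :=
  (coneMeasure n p c).map
    (fun z i => if i ∈ A then
        ((∑ j ∈ A, |x j| ^ p) / (∑ j ∈ A, |z j| ^ p)) ^ (1 / p) * z i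
      else x i)

/-- The metric `dist(x,y) = ∑ᵢ ||xᵢ|^p - |yᵢ|^p| + ∑ᵢ 1_{xᵢyᵢ<0}` on the `ℓ_p` sphere. -/
noncomputable def distLp (n : ℕ) (p : ℝ) (x y : Fin n → ℝ) : ℝ :=
  ∑ i, |(|x i| ^ p - |y i| ^ p)| + ∑ i, (if x i * y i < 0 then (1:ℝ) else 0)

/-! ### Auxiliary definitions and lemmas -/

/-- The resampling map whose pushforward of the cone measure is `lpKernel`. -/
noncomputable def Tmap (n : ℕ) (p : ℝ) (A : Finset (Fin n)) (x : Fin n → ℝ)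
    (z : Fin n → ℝ) : Fin n → ℝ :=
  fun i => if i ∈ A then
      ((∑ j ∈ A, |x j| ^ p) / (∑ j ∈ A, |z j| ^ p)) ^ (1 / p) * z i
    else x i

lemma lpKernel_eq (n : ℕ) (p c : ℝ) (A : Finset (Fin n)) (x : Fin n → ℝ) :
    lpKernel n p c A x = (coneMeasure n p c).map (Tmap n p A x) := rfl

lemma measurable_Tmap (n : ℕ) (p : ℝ) (A : Finset (Fin n)) (x : Fin n → ℝ) :
    Measurable (Tmap n p A x) := by
  apply measurable_pi_lambda
  intro i
  by_cases hi : i ∈ A <;> simp only [Tmap, hi, if_true, if_false] <;> fun_prop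

lemma abs_rpow_scale {p : ℝ} (hp : 0 < p) (a t : ℝ) (ha : 0 ≤ a) :
    |a ^ (1 / p) * t| ^ p = a * |t| ^ p := by
  rw [abs_mul, abs_of_nonneg (Real.rpow_nonneg ha _),
    Real.mul_rpow (Real.rpow_nonneg ha _) (abs_nonneg t),
    ← Real.rpow_mul ha, one_div_mul_cancel hp.ne', Real.rpow_one]

lemma sum_rpow_nonneg {n : ℕ} (p : ℝ) (A : Finset (Fin n)) (x : Fin n → ℝ) :
    0 ≤ ∑ j ∈ A, |x j| ^ p :=
  Finset.sum_nonneg fun j _ => Real.rpow_nonneg (abs_nonneg _) _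

/-- The sum over `A` of `|·|^p` is preserved by the resampling map. -/
lemma sumA_Tmap {n : ℕ} {p : ℝ} (hp : 0 < p) (A : Finset (Fin n)) (x z : Fin n → ℝ)
    (hG : A.Nonempty → 0 < ∑ j ∈ A, |z j| ^ p) :
    ∑ i ∈ A, |Tmap n p A x z i| ^ p = ∑ j ∈ A, |x j| ^ p := by
  rcases A.eq_empty_or_nonempty with hA | hA
  · simp [hA]
  · have hS := hG hA
    have hterm : ∀ i ∈ A, |Tmap n p A x z i| ^ p
        = (∑ j ∈ A, |x j| ^ p) / (∑ j ∈ A, |z j| ^ p) * |z i| ^ p := by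
      intro i hi
      simp only [Tmap, if_pos hi]
      rw [abs_rpow_scale hp _ _ (div_nonneg (sum_rpow_nonneg p A x) hS.le)]
    rw [Finset.sum_congr rfl hterm, ← Finset.mul_sum, div_mul_cancel₀ _ hS.ne']

/-- On good points, the coupling map attains exactly the claimed distance. -/
lemma dist_Tmap_eq {n : ℕ} {p : ℝ} (hp : 0 < p) (A : Finset (Fin n)) (x y z : Fin n → ℝ)
    (hG : A.Nonempty → 0 < ∑ j ∈ A, |z j| ^ p) :
    distLp n p (Tmap n p A x z) (Tmap n p A y z)
      = (∑ i ∈ Finset.univ \ A, |(|x i| ^ p - |y i| ^ p)|)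
        + (∑ i ∈ Finset.univ \ A, (if x i * y i < 0 then (1:ℝ) else 0))
        + |∑ i ∈ A, (|x i| ^ p - |y i| ^ p)| := by
  rcases A.eq_empty_or_nonempty with hA | hA
  · subst hA
    simp [distLp, Tmap]
  · have hS := hG hA
    have sx0 := sum_rpow_nonneg (n := n) p A x
    have sy0 := sum_rpow_nonneg (n := n) p A y
    have habs : ∑ i, |(|Tmap n p A x z i| ^ p - |Tmap n p A y z i| ^ p)|
        = (∑ i ∈ Finset.univ \ A, |(|x i| ^ p - |y i| ^ p)|)
          + |∑ i ∈ A, (|x i| ^ p - |y i| ^ p)| := by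
      rw [← Finset.sum_sdiff (Finset.subset_univ A)]
      congr 1
      · apply Finset.sum_congr rfl
        intro i hi
        have hiA : i ∉ A := (Finset.mem_sdiff.mp hi).2
        simp [Tmap, hiA]
      · have hterm : ∀ i ∈ A, |(|Tmap n p A x z i| ^ p - |Tmap n p A y z i| ^ p)|
            = |∑ j ∈ A, (|x j| ^ p - |y j| ^ p)| / (∑ j ∈ A, |z j| ^ p) * |z i| ^ p := by
          intro i hi
          have ht : (0:ℝ) ≤ |z i| ^ p := Real.rpow_nonneg (abs_nonneg _) _
          simp only [Tmap, if_pos hi]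
          rw [abs_rpow_scale hp _ _ (div_nonneg sx0 hS.le),
            abs_rpow_scale hp _ _ (div_nonneg sy0 hS.le),
            ← sub_mul, abs_mul, abs_of_nonneg ht, ← sub_div, abs_div,
            abs_of_pos hS, Finset.sum_sub_distrib]
        rw [Finset.sum_congr rfl hterm, ← Finset.mul_sum, div_mul_cancel₀ _ hS.ne']
    have hind : ∑ i, (if Tmap n p A x z i * Tmap n p A y z i < 0 then (1:ℝ) else 0)
        = ∑ i ∈ Finset.univ \ A, (if x i * y i < 0 then (1:ℝ) else 0) := by
      rw [← Finset.sum_sdiff (Finset.subset_univ A)]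
      have hz : ∑ i ∈ A, (if Tmap n p A x z i * Tmap n p A y z i < 0 then (1:ℝ) else 0)
          = 0 := by
        apply Finset.sum_eq_zero
        intro i hi
        have hnn : 0 ≤ Tmap n p A x z i * Tmap n p A y z i := by
          simp only [Tmap, if_pos hi]
          rw [mul_mul_mul_comm]
          exact mul_nonneg
            (mul_nonneg (Real.rpow_nonneg (div_nonneg sx0 hS.le) _)
              (Real.rpow_nonneg (div_nonneg sy0 hS.le) _))
            (mul_self_nonneg _)
        rw [if_neg (not_lt.mpr hnn)]
      rw [hz, add_zero]
      apply Finset.sum_congr rfl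
      intro i hi
      have hiA : i ∉ A := (Finset.mem_sdiff.mp hi).2
      simp [Tmap, hiA]
    rw [distLp, habs, hind]
    ring

/-- The pointwise lower bound for arbitrary couplings. -/
lemma dist_lower {n : ℕ} (p : ℝ) (A : Finset (Fin n)) (x y q1 q2 : Fin n → ℝ)
    (h1 : ∀ i, i ∉ A → q1 i = x i) (h2 : ∀ i, i ∉ A → q2 i = y i)
    (hs1 : ∑ i ∈ A, |q1 i| ^ p = ∑ i ∈ A, |x i| ^ p)
    (hs2 : ∑ i ∈ A, |q2 i| ^ p = ∑ i ∈ A, |y i| ^ p) :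
    (∑ i ∈ Finset.univ \ A, |(|x i| ^ p - |y i| ^ p)|)
      + (∑ i ∈ Finset.univ \ A, (if x i * y i < 0 then (1:ℝ) else 0))
      + |∑ i ∈ A, (|x i| ^ p - |y i| ^ p)| ≤ distLp n p q1 q2 := by
  have e1 : ∑ i, |(|q1 i| ^ p - |q2 i| ^ p)|
      = (∑ i ∈ Finset.univ \ A, |(|x i| ^ p - |y i| ^ p)|)
        + ∑ i ∈ A, |(|q1 i| ^ p - |q2 i| ^ p)| := by
    rw [← Finset.sum_sdiff (Finset.subset_univ A)]
    congr 1
    apply Finset.sum_congr rfl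
    intro i hi
    have hiA : i ∉ A := (Finset.mem_sdiff.mp hi).2
    rw [h1 i hiA, h2 i hiA]
  have e2 : ∑ i ∈ Finset.univ \ A, (if x i * y i < 0 then (1:ℝ) else 0)
      ≤ ∑ i, (if q1 i * q2 i < 0 then (1:ℝ) else 0) := by
    rw [← Finset.sum_sdiff (Finset.subset_univ A)
      (f := fun i => if q1 i * q2 i < 0 then (1:ℝ) else 0)]
    have eoff : ∑ i ∈ Finset.univ \ A, (if x i * y i < 0 then (1:ℝ) else 0)
        = ∑ i ∈ Finset.univ \ A, (if q1 i * q2 i < 0 then (1:ℝ) else 0) := by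
      apply Finset.sum_congr rfl
      intro i hi
      have hiA : i ∉ A := (Finset.mem_sdiff.mp hi).2
      rw [h1 i hiA, h2 i hiA]
    rw [eoff]
    apply le_add_of_nonneg_right
    apply Finset.sum_nonneg
    intro i _
    split <;> norm_num
  have e3 : |∑ i ∈ A, (|x i| ^ p - |y i| ^ p)|
      ≤ ∑ i ∈ A, |(|q1 i| ^ p - |q2 i| ^ p)| := by
    have heq : ∑ i ∈ A, (|x i| ^ p - |y i| ^ p)
        = ∑ i ∈ A, (|q1 i| ^ p - |q2 i| ^ p) := by
      rw [Finset.sum_sub_distrib, Finset.sum_sub_distrib, hs1, hs2]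
    rw [heq]
    exact Finset.abs_sum_le_sum_abs _ _
  rw [distLp]
  linarith

lemma measurable_distLp_pair (n : ℕ) (p : ℝ) :
    Measurable fun q : (Fin n → ℝ) × (Fin n → ℝ) => distLp n p q.1 q.2 := by
  unfold distLp
  apply Measurable.add
  · fun_prop
  · apply Finset.measurable_sum
    intro i _
    exact Measurable.ite (measurableSet_lt (by fun_prop) measurable_const)
      measurable_const measurable_const

/-- Almost surely under the cone measure, the `A`-block has positive `p`-mass. -/
lemma ae_good {n : ℕ} {p : ℝ} (c : ℝ) (hp : 0 < p) (A : Finset (Fin n)) :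
    ∀ᵐ z ∂coneMeasure n p c, A.Nonempty → 0 < ∑ j ∈ A, |z j| ^ p := by
  rcases A.eq_empty_or_nonempty with hA | hA
  · exact MeasureTheory.ae_of_all _ fun z hne => absurd (hA ▸ hne) (by simp)
  · obtain ⟨j0, hj0⟩ := hA
    have key : ∀ᵐ z ∂coneMeasure n p c, 0 < ∑ j ∈ A, |z j| ^ p := by
      rw [coneMeasure]
      have hmeas : Measurable fun (g : Fin n → ℝ) (i : Fin n) =>
          g i / (∑ j, |g j| ^ p) ^ (1 / p) := by
        apply measurable_pi_lambda
        intro i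
        fun_prop
      rw [MeasureTheory.ae_map_iff hmeas.aemeasurable
        (measurableSet_lt measurable_const (by fun_prop))]
      have hvol : ∀ᵐ g : Fin n → ℝ ∂volume,
          0 < ∑ j ∈ A, |g j / (∑ k, |g k| ^ p) ^ (1 / p)| ^ p := by
        have h0 : ∀ᵐ g : Fin n → ℝ ∂volume, ¬ g j0 = 0 := by
          rw [ae_iff]
          simp only [not_not]
          rw [MeasureTheory.volume_pi]
          exact MeasureTheory.Measure.pi_hyperplane _ j0 0
        filter_upwards [h0] with g hg
        have hsumpos : 0 < ∑ k, |g k| ^ p :=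
          Finset.sum_pos' (fun k _ => Real.rpow_nonneg (abs_nonneg _) _)
            ⟨j0, Finset.mem_univ j0, Real.rpow_pos_of_pos (abs_pos.mpr hg) p⟩
        have hN : 0 < (∑ k, |g k| ^ p) ^ (1 / p) := Real.rpow_pos_of_pos hsumpos _
        exact Finset.sum_pos' (fun k _ => Real.rpow_nonneg (abs_nonneg _) _)
          ⟨j0, hj0, Real.rpow_pos_of_pos (abs_pos.mpr (div_ne_zero hg hN.ne')) p⟩
      exact hvol.filter_mono
        (MeasureTheory.withDensity_absolutelyContinuous _ _).ae_le
    exact key.mono fun z hz _ => hz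

lemma measurable_Qset {n : ℕ} (p : ℝ) (A : Finset (Fin n)) (x : Fin n → ℝ) :
    MeasurableSet {w : Fin n → ℝ |
      (∀ i, i ∉ A → w i = x i) ∧ ∑ i ∈ A, |w i| ^ p = ∑ i ∈ A, |x i| ^ p} := by
  apply MeasurableSet.inter
  · show MeasurableSet {w : Fin n → ℝ | ∀ i, i ∉ A → w i = x i}
    have : {w : Fin n → ℝ | ∀ i, i ∉ A → w i = x i}
        = ⋂ i, ⋂ (_ : i ∉ A), {w : Fin n → ℝ | w i = x i} := by
      ext w; simp
    rw [this]
    exact MeasurableSet.iInter fun i => MeasurableSet.iInter fun _ =>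
      measurableSet_eq_fun (measurable_pi_apply i) measurable_const
  · exact measurableSet_eq_fun (by fun_prop) measurable_const

/-- Almost surely under `lpKernel`, the off-`A` coordinates equal `x` and the `A`-block
`p`-mass equals that of `x`. -/
lemma ae_kernel {n : ℕ} {p : ℝ} (c : ℝ) (hp : 0 < p) (A : Finset (Fin n)) (x : Fin n → ℝ) :
    ∀ᵐ w ∂lpKernel n p c A x,
      (∀ i, i ∉ A → w i = x i) ∧ ∑ i ∈ A, |w i| ^ p = ∑ i ∈ A, |x i| ^ p := by
  rw [lpKernel_eq, MeasureTheory.ae_map_iff (measurable_Tmap n p A x).aemeasurable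
    (measurable_Qset p A x)]
  filter_upwards [ae_good c hp A] with z hz
  constructor
  · intro i hi
    simp [Tmap, hi]
  · exact sumA_Tmap hp A x z hz

/-- Optimal coupling on `ℓ_p` spheres. -/
theorem stmt_16 {n : ℕ} (p c : ℝ) (hp : 0 < p) (hc : 0 < c)
    [IsProbabilityMeasure (coneMeasure n p c)]
    (A : Finset (Fin n)) (x y : Fin n → ℝ)
    (hx : ∑ i, |x i| ^ p = 1) (hy : ∑ i, |y i| ^ p = 1) :
    (∃ π : Measure ((Fin n → ℝ) × (Fin n → ℝ)), IsProbabilityMeasure π ∧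
      π.map Prod.fst = lpKernel n p c A x ∧ π.map Prod.snd = lpKernel n p c A y ∧
      ∀ᵐ q ∂π, distLp n p q.1 q.2
        = (∑ i ∈ Finset.univ \ A, |(|x i| ^ p - |y i| ^ p)|)
          + (∑ i ∈ Finset.univ \ A, (if x i * y i < 0 then (1:ℝ) else 0))
          + |∑ i ∈ A, (|x i| ^ p - |y i| ^ p)|) ∧
    (∀ π : Measure ((Fin n → ℝ) × (Fin n → ℝ)), IsProbabilityMeasure π →
      π.map Prod.fst = lpKernel n p c A x → π.map Prod.snd = lpKernel n p c A y →
      ∀ᵐ q ∂π,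
        (∑ i ∈ Finset.univ \ A, |(|x i| ^ p - |y i| ^ p)|)
          + (∑ i ∈ Finset.univ \ A, (if x i * y i < 0 then (1:ℝ) else 0))
          + |∑ i ∈ A, (|x i| ^ p - |y i| ^ p)| ≤ distLp n p q.1 q.2) ∧
    ((∑ i ∈ Finset.univ \ A, |(|x i| ^ p - |y i| ^ p)|)
      + (∑ i ∈ Finset.univ \ A, (if x i * y i < 0 then (1:ℝ) else 0))
      + |∑ i ∈ A, (|x i| ^ p - |y i| ^ p)| ≤ distLp n p x y) := by
  have hTx := measurable_Tmap n p A x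
  have hTy := measurable_Tmap n p A y
  have hpair : Measurable fun z => (Tmap n p A x z, Tmap n p A y z) := hTx.prodMk hTy
  refine ⟨⟨(coneMeasure n p c).map fun z => (Tmap n p A x z, Tmap n p A y z),
    Measure.isProbabilityMeasure_map hpair.aemeasurable, ?_, ?_, ?_⟩, ?_, ?_⟩
  · rw [Measure.map_map measurable_fst hpair]
    rfl
  · rw [Measure.map_map measurable_snd hpair]
    rfl
  · rw [MeasureTheory.ae_map_iff hpair.aemeasurable
      (measurableSet_eq_fun (measurable_distLp_pair n p) measurable_const)]
    filter_upwards [ae_good c hp A] with z hz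
    exact dist_Tmap_eq hp A x y z hz
  · intro π hπ hfst hsnd
    have hQ1 : ∀ᵐ q : (Fin n → ℝ) × (Fin n → ℝ) ∂π,
        (∀ i, i ∉ A → q.1 i = x i) ∧ ∑ i ∈ A, |q.1 i| ^ p = ∑ i ∈ A, |x i| ^ p := by
      have h := ae_kernel c hp A x
      rw [← hfst] at h
      exact (MeasureTheory.ae_map_iff measurable_fst.aemeasurable
        (measurable_Qset p A x)).mp h
    have hQ2 : ∀ᵐ q : (Fin n → ℝ) × (Fin n → ℝ) ∂π,
        (∀ i, i ∉ A → q.2 i = y i) ∧ ∑ i ∈ A, |q.2 i| ^ p = ∑ i ∈ A, |y i| ^ p := by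
      have h := ae_kernel c hp A y
      rw [← hsnd] at h
      exact (MeasureTheory.ae_map_iff measurable_snd.aemeasurable
        (measurable_Qset p A y)).mp h
    filter_upwards [hQ1, hQ2] with q h1 h2
    exact dist_lower p A x y q.1 q.2 h1.1 h2.1 h1.2 h2.2
  · exact dist_lower p A x y x y (fun _ _ => rfl) (fun _ _ => rfl) rfl rfl
end

section
/- Down-up walk coupling bound: Let S be a finite set of size N, Ω the collection of n-element subsets of S (1 ≤ n ≤ N−1), and dist(X,Y) := n − |X ∩ Y|. For 1 ≤ k ≤ n, let T_k(X,·) be the law of the set obtained by removing k uniformly random elements of X and then adding k uniformly random elements of S minus the remaining (n−k)-set. Then for all X, Y ∈ Ω: W_∞(T_k(X,·), T_k(Y,·)) ≤ dist(X,Y) and W₁(T_k(X,·), T_k(Y,·)) ≤ (1 − k/n)(1 − k/(N−(n−k))) dist(X,Y). -/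
open MeasureTheory ProbabilityTheory
open scoped BigOperators Classical

noncomputable instance {α : Type*} : MeasurableSpace (Finset α) := ⊤

instance {α : Type*} : MeasurableSingletonClass (Finset α) := ⟨fun _ => trivial⟩

/-- The `(n ↔ n-k)` down-up walk kernel on `n`-element subsets of `S`: remove `k`
uniformly random elements, then add back `k` uniformly random elements of the
complement of the remaining `(n-k)`-set. -/
noncomputable def downUpKernel {α : Type*} [Fintype α] (n k : ℕ) (X : Finset α) :
    Measure (Finset α) :=
  (uniformOn {D : Finset α | D ⊆ X ∧ D.card = n - k}).bind
    (fun D => uniformOn {E : Finset α | D ⊆ E ∧ E.card = n})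

/-- The discrepancy distance `dist(X,Y) = n - |X ∩ Y|` on `n`-element subsets. -/
noncomputable def setDist {α : Type*} (n : ℕ) (X Y : Finset α) : ℕ :=
  n - (X ∩ Y).card

section Helpers
set_option linter.unusedSectionVars false
variable {α : Type*} [Fintype α]

lemma finsetMeasurableSet (s : Set (Finset α)) : MeasurableSet s :=
  MeasurableSpace.measurableSet_top

lemma uniformOn_finset_apply (s : Finset (Finset α)) (t : Set (Finset α)) :
    uniformOn (↑s) t
      = ((s.card : ENNReal))⁻¹ * ((s.filter (· ∈ t)).card : ENNReal) := by
  rw [uniformOn, cond_apply (finsetMeasurableSet _)]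
  congr 1
  · rw [Measure.count_apply_finset]
  · have : (↑s ∩ t : Set (Finset α)) = ↑(s.filter (· ∈ t)) := by
      ext E; simp [Finset.mem_filter]
    rw [this, Measure.count_apply_finset]

lemma uniformOn_finset_singleton (s : Finset (Finset α)) (x : Finset α) :
    uniformOn (↑s) {x} = if x ∈ s then ((s.card : ENNReal))⁻¹ else 0 := by
  rw [uniformOn_finset_apply]
  simp only [Set.mem_singleton_iff, Finset.filter_eq']
  split_ifs with h <;> simp

end Helpers

section Counting
set_option linter.unusedSectionVars false
variable {α : Type*} [Fintype α]

lemma card_supersets (n : ℕ) (D : Finset α) (hDn : D.card ≤ n) :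
    ((Finset.univ.powersetCard n).filter (fun E => D ⊆ E)).card
      = (Fintype.card α - D.card).choose (n - D.card) := by
  rw [← Finset.card_compl D, ← Finset.card_powersetCard]
  apply Finset.card_nbij' (fun E => E \ D) (fun F => D ∪ F)
  · intro E hE
    simp only [Finset.mem_coe, Finset.mem_filter, Finset.mem_powersetCard] at hE ⊢
    obtain ⟨⟨-, hcard⟩, hsub⟩ := hE
    constructor
    · intro a ha
      simp only [Finset.mem_sdiff] at ha
      simp [Finset.mem_compl, ha.2]
    · rw [Finset.card_sdiff_of_subset hsub, hcard]
  · intro F hF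
    simp only [Finset.mem_coe, Finset.mem_powersetCard] at hF
    obtain ⟨hsub, hcard⟩ := hF
    have hdisj : Disjoint D F := by
      rw [Finset.disjoint_left]
      intro a haD haF
      have := hsub haF
      simp [Finset.mem_compl, haD] at this
    simp only [Finset.mem_coe, Finset.mem_filter, Finset.mem_powersetCard]
    refine ⟨⟨Finset.subset_univ _, ?_⟩, Finset.subset_union_left⟩
    rw [Finset.card_union_of_disjoint hdisj, hcard]
    omega
  · intro E hE
    simp only [Finset.mem_coe, Finset.mem_filter, Finset.mem_powersetCard] at hE
    exact Finset.union_sdiff_of_subset hE.2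
  · intro F hF
    simp only [Finset.mem_coe, Finset.mem_powersetCard] at hF
    apply Finset.union_sdiff_cancel_left
    rw [Finset.disjoint_left]
    intro a haD haF
    have := hF.1 haF
    simp [Finset.mem_compl, haD] at this

lemma card_supersets_avoid (n : ℕ) (D : Finset α) (hDn : D.card ≤ n)
    (y : α) (hy : y ∉ D) :
    ((Finset.univ.powersetCard n).filter (fun E => D ⊆ E ∧ y ∉ E)).card
      = (Fintype.card α - D.card - 1).choose (n - D.card) := by
  have hycompl : y ∈ Dᶜ := by simp [Finset.mem_compl, hy]
  have h1 : ((Dᶜ).erase y).card = Fintype.card α - D.card - 1 := by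
    rw [Finset.card_erase_of_mem hycompl, Finset.card_compl]
  rw [← h1, ← Finset.card_powersetCard]
  apply Finset.card_nbij' (fun E => E \ D) (fun F => D ∪ F)
  · intro E hE
    simp only [Finset.mem_coe, Finset.mem_filter, Finset.mem_powersetCard] at hE ⊢
    obtain ⟨⟨-, hcard⟩, hsub, hyE⟩ := hE
    constructor
    · intro a ha
      simp only [Finset.mem_sdiff] at ha
      simp only [Finset.mem_erase, Finset.mem_compl]
      exact ⟨fun h => hyE (h ▸ ha.1), ha.2⟩
    · rw [Finset.card_sdiff_of_subset hsub, hcard]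
  · intro F hF
    simp only [Finset.mem_coe, Finset.mem_powersetCard] at hF
    obtain ⟨hsub, hcard⟩ := hF
    have hsub' : F ⊆ Dᶜ := hsub.trans (Finset.erase_subset _ _)
    have hdisj : Disjoint D F := by
      rw [Finset.disjoint_left]
      intro a haD haF
      have := hsub' haF
      simp [Finset.mem_compl, haD] at this
    simp only [Finset.mem_coe, Finset.mem_filter, Finset.mem_powersetCard]
    refine ⟨⟨Finset.subset_univ _, ?_⟩, Finset.subset_union_left, ?_⟩
    · rw [Finset.card_union_of_disjoint hdisj, hcard]; omega
    · simp only [Finset.mem_union]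
      rintro (h | h)
      · exact hy h
      · exact (Finset.mem_erase.mp (hsub h)).1 rfl
  · intro E hE
    simp only [Finset.mem_coe, Finset.mem_filter, Finset.mem_powersetCard] at hE
    exact Finset.union_sdiff_of_subset hE.2.1
  · intro F hF
    simp only [Finset.mem_coe, Finset.mem_powersetCard] at hF
    apply Finset.union_sdiff_cancel_left
    rw [Finset.disjoint_left]
    intro a haD haF
    have := (hF.1.trans (Finset.erase_subset _ _)) haF
    simp [Finset.mem_compl, haD] at this

lemma card_subsets_mem (m : ℕ) (X : Finset α) (x : α) (hx : x ∈ X) :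
    ((X.powersetCard m).filter (fun D => x ∈ D)).card
      = X.card.choose m - (X.card - 1).choose m := by
  have hsplit := Finset.card_filter_add_card_filter_not
    (s := X.powersetCard m) (p := fun D => x ∈ D)
  have hneg : (X.powersetCard m).filter (fun D => ¬ x ∈ D)
      = (X.erase x).powersetCard m := by
    ext D
    simp only [Finset.mem_filter, Finset.mem_powersetCard, Finset.subset_erase]
    tauto
  have hcard1 : ((X.erase x).powersetCard m).card = (X.card - 1).choose m := by
    rw [Finset.card_powersetCard, Finset.card_erase_of_mem hx]
  have hcard2 : (X.powersetCard m).card = X.card.choose m := Finset.card_powersetCard _ _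
  have hle : (X.card - 1).choose m ≤ X.card.choose m :=
    Nat.choose_le_choose _ (by omega)
  rw [hneg, hcard1, hcard2] at hsplit
  omega

lemma choose_ratio {M k : ℕ} (h1 : 1 ≤ M) (h2 : k ≤ M - 1) :
    (M - k) * M.choose k = M * (M - 1).choose k := by
  have hkM : k < M := by omega
  have e1 : (M - 1).choose k = (M - 1).choose (M - k - 1) := by
    rw [← Nat.choose_symm h2]
    congr 1
    omega
  have := Nat.add_one_mul_choose_eq (M - 1) (M - k - 1)
  have hM : M - 1 + 1 = M := by omega
  have hMk : M - k - 1 + 1 = M - k := by omega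
  rw [hM, hMk] at this
  rw [e1, this, Nat.choose_symm hkM.le]
  ring

end Counting

section Pairing
set_option linter.unusedSectionVars false
variable {α : Type*} [DecidableEq α] (X Y : Finset α)

noncomputable def efn (e : {x // x ∈ X \ Y} ≃ {y // y ∈ Y \ X}) : α → α := fun a =>
  if h : a ∈ X \ Y then (e ⟨a, h⟩ : α) else a

noncomputable def esn (e : {x // x ∈ X \ Y} ≃ {y // y ∈ Y \ X}) : α → α := fun b =>
  if h : b ∈ Y \ X then (e.symm ⟨b, h⟩ : α) else b

variable (e : {x // x ∈ X \ Y} ≃ {y // y ∈ Y \ X})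

lemma efn_mem {a : α} (h : a ∈ X \ Y) : efn X Y e a ∈ Y \ X := by
  simp only [efn, dif_pos h]; exact (e ⟨a, h⟩).2

lemma esn_mem {b : α} (h : b ∈ Y \ X) : esn X Y e b ∈ X \ Y := by
  simp only [esn, dif_pos h]; exact (e.symm ⟨b, h⟩).2

lemma esn_efn {a : α} (h : a ∈ X \ Y) : esn X Y e (efn X Y e a) = a := by
  have h2 := efn_mem X Y e h
  simp only [esn, dif_pos h2]
  have : (⟨efn X Y e a, h2⟩ : {y // y ∈ Y \ X}) = e ⟨a, h⟩ := by
    apply Subtype.ext; simp only [efn, dif_pos h]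
  rw [this, Equiv.symm_apply_apply]

lemma efn_esn {b : α} (h : b ∈ Y \ X) : efn X Y e (esn X Y e b) = b := by
  have h2 := esn_mem X Y e h
  simp only [efn, dif_pos h2]
  have : (⟨esn X Y e b, h2⟩ : {x // x ∈ X \ Y}) = e.symm ⟨b, h⟩ := by
    apply Subtype.ext; simp only [esn, dif_pos h]
  rw [this, Equiv.apply_symm_apply]

noncomputable def gfn (J : Finset α) : α → α := fun a =>
  if a ∈ X \ Y then (if a ∈ J then efn X Y e a else a)
  else if a ∈ Y \ X then (if esn X Y e a ∈ J then esn X Y e a else a) else a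

variable {X Y e}
variable {J : Finset α} (hJ : J ⊆ X \ Y)

lemma sdiff_disj {a : α} (h : a ∈ X \ Y) : a ∉ Y \ X := by
  simp only [Finset.mem_sdiff] at h ⊢; tauto

include hJ

lemma gfn_of_mem {a : α} (ha : a ∈ J) : gfn X Y e J a = efn X Y e a := by
  have h1 : a ∈ X \ Y := hJ ha
  simp only [gfn, if_pos h1, if_pos ha]

lemma gfn_of_left {a : α} (h1 : a ∈ X \ Y) (ha : a ∉ J) : gfn X Y e J a = a := by
  simp only [gfn, if_pos h1, if_neg ha]

lemma gfn_of_right_mem {b : α} (h1 : b ∈ Y \ X) (hb : esn X Y e b ∈ J) :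
    gfn X Y e J b = esn X Y e b := by
  simp only [gfn, if_neg (fun h => sdiff_disj h h1), if_pos h1, if_pos hb]

lemma gfn_of_right_not {b : α} (h1 : b ∈ Y \ X) (hb : esn X Y e b ∉ J) :
    gfn X Y e J b = b := by
  simp only [gfn, if_neg (fun h => sdiff_disj h h1), if_pos h1, if_neg hb]

omit hJ in
lemma gfn_of_out {a : α} (h1 : a ∉ X \ Y) (h2 : a ∉ Y \ X) : gfn X Y e J a = a := by
  simp only [gfn, if_neg h1, if_neg h2]

lemma gfn_invol : Function.Involutive (gfn X Y e J) := by
  intro a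
  by_cases h1 : a ∈ X \ Y
  · by_cases ha : a ∈ J
    · rw [gfn_of_mem hJ ha]
      have h2 : efn X Y e a ∈ Y \ X := efn_mem X Y e h1
      rw [gfn_of_right_mem hJ h2 (by rw [esn_efn X Y e h1]; exact ha),
        esn_efn X Y e h1]
    · rw [gfn_of_left hJ h1 ha, gfn_of_left hJ h1 ha]
  · by_cases h2 : a ∈ Y \ X
    · by_cases hb : esn X Y e a ∈ J
      · rw [gfn_of_right_mem hJ h2 hb]
        rw [gfn_of_mem hJ hb, efn_esn X Y e h2]
      · rw [gfn_of_right_not hJ h2 hb, gfn_of_right_not hJ h2 hb]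
    · rw [gfn_of_out h1 h2, gfn_of_out h1 h2]

lemma gfn_inj : Function.Injective (gfn X Y e J) := (gfn_invol hJ).injective

lemma mem_image_gfn {a : α} {A : Finset α} :
    a ∈ A.image (gfn X Y e J) ↔ gfn X Y e J a ∈ A := by
  constructor
  · rintro h
    obtain ⟨b, hb, rfl⟩ := Finset.mem_image.mp h
    rwa [gfn_invol hJ b]
  · intro h
    exact Finset.mem_image.mpr ⟨_, h, gfn_invol hJ a⟩

lemma card_image_gfn (A : Finset α) : (A.image (gfn X Y e J)).card = A.card :=
  Finset.card_image_of_injective _ (gfn_inj hJ)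

lemma image_image_gfn (A : Finset α) :
    (A.image (gfn X Y e J)).image (gfn X Y e J) = A := by
  rw [Finset.image_image]
  have : (gfn X Y e J) ∘ (gfn X Y e J) = id := funext (gfn_invol hJ)
  rw [this, Finset.image_id]

end Pairing

/-- Down-up walk coupling bound: for the `(n ↔ n-k)` down-up walk on `n`-element subsets
of a set of size `N`, `W_∞(T_k(X,·),T_k(Y,·)) ≤ dist(X,Y)` and
`W₁(T_k(X,·),T_k(Y,·)) ≤ (1 - k/n)(1 - k/(N-(n-k))) dist(X,Y)`, witnessed by
couplings. -/
theorem stmt_18 {α : Type*} [Fintype α] (n k : ℕ)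
    (hn1 : 1 ≤ n) (hnN : n ≤ Fintype.card α - 1) (hk1 : 1 ≤ k) (hkn : k ≤ n)
    (X Y : Finset α) (hX : X.card = n) (hY : Y.card = n) :
    (∃ π : Measure (Finset α × Finset α), IsProbabilityMeasure π ∧
      π.map Prod.fst = downUpKernel n k X ∧ π.map Prod.snd = downUpKernel n k Y ∧
      ∀ᵐ q ∂π, setDist n q.1 q.2 ≤ setDist n X Y) ∧
    (∃ π : Measure (Finset α × Finset α), IsProbabilityMeasure π ∧
      π.map Prod.fst = downUpKernel n k X ∧ π.map Prod.snd = downUpKernel n k Y ∧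
      ∫ q, (setDist n q.1 q.2 : ℝ) ∂π
        ≤ (1 - (k : ℝ) / n) * (1 - (k : ℝ) / ((Fintype.card α : ℝ) - ((n - k : ℕ) : ℝ)))
            * (setDist n X Y : ℝ)) := by
  classical
  -- Notation
  have hnN' : n ≤ Fintype.card α := hX ▸ Finset.card_le_univ X
  have hN : n + 1 ≤ Fintype.card α := by omega
  have hmn : n - k ≤ n := Nat.sub_le _ _
  set N := Fintype.card α with hNdef
  set M := N - (n - k) with hMdef
  have hMk : k + 1 ≤ M := by omega
  set d := setDist n X Y with hddef
  have hd' : d = n - (X ∩ Y).card := rfl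
  have hdXY : (X \ Y).card = d := by
    have h1 := Finset.card_sdiff_add_card_inter X Y
    have h2 : (X ∩ Y).card ≤ n := by
      rw [← hX]; exact Finset.card_le_card Finset.inter_subset_left
    omega
  have hdYX : (Y \ X).card = d := by
    have h1 := Finset.card_sdiff_add_card_inter Y X
    rw [Finset.inter_comm] at h1
    have h2 : (X ∩ Y).card ≤ n := by
      rw [← hX]; exact Finset.card_le_card Finset.inter_subset_left
    omega
  have hcards : Fintype.card {x // x ∈ X \ Y} = Fintype.card {y // y ∈ Y \ X} := by
    simp only [Fintype.card_coe, hdXY, hdYX]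
  set e := Fintype.equivOfCardEq hcards with hedef
  -- the involutions and image maps
  set gD : Finset α → α → α := fun D => gfn X Y e (D ∩ (X \ Y)) with hgDdef
  set GD : Finset α → Finset α → Finset α := fun D E => E.image (gD D) with hGDdef
  have hJall : ∀ D : Finset α, D ∩ (X \ Y) ⊆ X \ Y := fun D => Finset.inter_subset_right
  set sDX := X.powersetCard (n - k) with hsDXdef
  set sDY := Y.powersetCard (n - k) with hsDYdef
  set sE : Finset α → Finset (Finset α) :=
    fun D => (Finset.univ.powersetCard n).filter (fun E => D ⊆ E) with hsEdef
  set T : Finset α → Finset α := fun D => GD D D with hTdef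
  set U : Finset α → Finset α :=
    fun D' => D'.image (gfn X Y e (((D' ∩ (Y \ X))).image (esn X Y e))) with hUdef
  set P := sDX.sigma (fun D => sE D) with hPdef
  set cD := Nat.choose n (n - k) with hcDdef
  set cE := Nat.choose M k with hcEdef
  set c : ENNReal := ((cD * cE : ℕ) : ENNReal) with hcdef
  set π : Measure (Finset α × Finset α) :=
    c⁻¹ • ∑ p ∈ P, Measure.dirac (p.2, GD p.1 p.2) with hπdef
  -- membership characterizations
  have mem_sE : ∀ D E : Finset α, E ∈ sE D ↔ D ⊆ E ∧ E.card = n := by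
    intro D E
    simp only [hsEdef, Finset.mem_filter, Finset.mem_powersetCard, Finset.subset_univ,
      true_and]
    tauto
  have mem_sDX : ∀ D : Finset α, D ∈ sDX ↔ D ⊆ X ∧ D.card = n - k := by
    intro D; simp [hsDXdef, Finset.mem_powersetCard]
  have mem_sDY : ∀ D : Finset α, D ∈ sDY ↔ D ⊆ Y ∧ D.card = n - k := by
    intro D; simp [hsDYdef, Finset.mem_powersetCard]
  -- cardinalities
  have hsEcard : ∀ D : Finset α, D.card = n - k → (sE D).card = cE := by
    intro D hD
    have := card_supersets (α := α) n D (by omega)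
    rw [hsEdef, this, hD]
    congr 1
    omega
  have hcD0 : 0 < cD := Nat.choose_pos (by omega)
  have hcE0 : 0 < cE := Nat.choose_pos (by omega)
  have hc0 : c ≠ 0 := by
    simp only [hcdef, ne_eq, Nat.cast_eq_zero]
    positivity
  have hcT : c ≠ ⊤ := ENNReal.natCast_ne_top _
  have hcinv : c⁻¹ = ((cD : ENNReal))⁻¹ * ((cE : ENNReal))⁻¹ := by
    rw [hcdef, Nat.cast_mul]
    rw [ENNReal.mul_inv (Or.inl (by exact_mod_cast hcD0.ne')) (Or.inl (ENNReal.natCast_ne_top _))]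
  -- kernel applied to a set
  have kernel_apply : ∀ Z : Finset α, Z.card = n → ∀ t : Set (Finset α),
      downUpKernel n k Z t = ∑ D ∈ Z.powersetCard (n - k),
        ((cD : ENNReal))⁻¹ * (((cE : ENNReal))⁻¹ *
          (((sE D).filter (· ∈ t)).card : ENNReal)) := by
    intro Z hZ t
    rw [downUpKernel]
    have hset1 : {D : Finset α | D ⊆ Z ∧ D.card = n - k} = ↑(Z.powersetCard (n - k)) := by
      ext D; simp [Finset.mem_powersetCard]
    have hset2 : ∀ D : Finset α, {E : Finset α | D ⊆ E ∧ E.card = n} = ↑(sE D) := by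
      intro D; ext E; simp [mem_sE]
    rw [hset1]
    rw [Measure.bind_apply (finsetMeasurableSet t) measurable_from_top.aemeasurable]
    rw [lintegral_fintype]
    have hterm : ∀ D : Finset α,
        uniformOn {E : Finset α | D ⊆ E ∧ E.card = n} t
          * uniformOn (↑(Z.powersetCard (n - k))) {D}
        = if D ∈ Z.powersetCard (n - k) then
            ((cD : ENNReal))⁻¹ * (((cE : ENNReal))⁻¹ *
              (((sE D).filter (· ∈ t)).card : ENNReal)) else 0 := by
      intro D
      rw [uniformOn_finset_singleton]
      split_ifs with hD
      · rw [hset2 D, uniformOn_finset_apply]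
        have hDcard : D.card = n - k := (Finset.mem_powersetCard.mp hD).2
        rw [hsEcard D hDcard, Finset.card_powersetCard, hZ]
        ring
      · rw [mul_zero]
    rw [Finset.sum_congr rfl (fun D _ => hterm D)]
    rw [Finset.sum_ite_mem, Finset.univ_inter]
  -- π applied to a set
  have pi_apply : ∀ t : Set (Finset α × Finset α),
      π t = c⁻¹ * ∑ p ∈ P, (if ((p.2 : Finset α), GD p.1 p.2) ∈ t then 1 else 0) := by
    intro t
    rw [hπdef, Measure.smul_apply, Measure.finset_sum_apply, smul_eq_mul]
    congr 1
    apply Finset.sum_congr rfl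
    intro p _
    rw [Measure.dirac_apply, Set.indicator_apply]
    rfl
  -- probability measure
  have hPcard : P.card = cD * cE := by
    rw [hPdef, Finset.card_sigma]
    have : ∀ D ∈ sDX, (sE D).card = cE := by
      intro D hD; exact hsEcard D ((mem_sDX D).mp hD).2
    rw [Finset.sum_congr rfl this, Finset.sum_const, smul_eq_mul,
      hsDXdef, Finset.card_powersetCard, hX]
  have hprob : IsProbabilityMeasure π := by
    constructor
    rw [pi_apply Set.univ]
    simp only [Set.mem_univ, if_true]
    rw [Finset.sum_const, nsmul_eq_mul, mul_one, hPcard, ← hcdef]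
    exact ENNReal.inv_mul_cancel hc0 hcT
  -- structural lemmas about the involution images
  have hGDGD : ∀ D A : Finset α, GD D (GD D A) = A := by
    intro D A
    simp only [hGDdef, hgDdef]
    exact image_image_gfn (hJall D) A
  have hT_mem : ∀ D ∈ sDX, T D ∈ sDY := by
    intro D hD
    obtain ⟨hDX, hDc⟩ := (mem_sDX D).mp hD
    rw [mem_sDY]
    simp only [hTdef, hGDdef, hgDdef]
    refine ⟨?_, by rw [card_image_gfn (hJall D), hDc]⟩
    intro b hb
    rw [mem_image_gfn (hJall D)] at hb
    by_cases h1 : b ∈ X \ Y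
    · by_cases h2 : b ∈ D ∩ (X \ Y)
      · rw [gfn_of_mem (hJall D) h2] at hb
        have hmem := efn_mem X Y e h1
        have hbX := hDX hb
        rw [Finset.mem_sdiff] at hmem
        exact absurd hbX hmem.2
      · rw [gfn_of_left (hJall D) h1 h2] at hb
        exact absurd (Finset.mem_inter.mpr ⟨hb, h1⟩) h2
    · by_cases h2 : b ∈ Y \ X
      · exact (Finset.mem_sdiff.mp h2).1
      · rw [gfn_of_out h1 h2] at hb
        have hbX := hDX hb
        rw [Finset.mem_sdiff] at h1
        push_neg at h1
        exact h1 hbX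
  have hTD_inter : ∀ D ∈ sDX, (T D) ∩ (Y \ X) = (D ∩ (X \ Y)).image (efn X Y e) := by
    intro D hD
    obtain ⟨hDX, hDc⟩ := (mem_sDX D).mp hD
    simp only [hTdef, hGDdef, hgDdef]
    ext b
    simp only [Finset.mem_inter]
    constructor
    · rintro ⟨hb1, hb2⟩
      rw [mem_image_gfn (hJall D)] at hb1
      by_cases h3 : esn X Y e b ∈ D ∩ (X \ Y)
      · exact Finset.mem_image.mpr ⟨esn X Y e b, h3, efn_esn X Y e hb2⟩
      · rw [gfn_of_right_not (hJall D) hb2 h3] at hb1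
        have := hDX hb1
        rw [Finset.mem_sdiff] at hb2
        exact absurd this hb2.2
    · intro hmem
      obtain ⟨a, ha, rfl⟩ := Finset.mem_image.mp hmem
      have ha1 : a ∈ X \ Y := (hJall D) ha
      refine ⟨?_, efn_mem X Y e ha1⟩
      rw [mem_image_gfn (hJall D)]
      rw [gfn_of_right_mem (hJall D) (efn_mem X Y e ha1)
        (by rw [esn_efn X Y e ha1]; exact ha)]
      rw [esn_efn X Y e ha1]
      exact (Finset.mem_inter.mp ha).1
  have himesn : ∀ J' : Finset α, J' ⊆ X \ Y →
      (J'.image (efn X Y e)).image (esn X Y e) = J' := by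
    intro J' hJ'
    rw [Finset.image_image]
    ext a
    simp only [Finset.mem_image, Function.comp_apply]
    constructor
    · rintro ⟨b, hb, rfl⟩
      rw [esn_efn X Y e (hJ' hb)]
      exact hb
    · intro ha
      exact ⟨a, ha, esn_efn X Y e (hJ' ha)⟩
  have hJ'img : ∀ D' : Finset α, ((D' ∩ (Y \ X)).image (esn X Y e)) ⊆ X \ Y := by
    intro D' a ha
    obtain ⟨b, hb, rfl⟩ := Finset.mem_image.mp ha
    exact esn_mem X Y e (Finset.mem_inter.mp hb).2
  have hUT : ∀ D ∈ sDX, U (T D) = D := by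
    intro D hD
    simp only [hUdef]
    rw [hTD_inter D hD, himesn _ (hJall D)]
    simp only [hTdef, hGDdef, hgDdef]
    exact image_image_gfn (hJall D) D
  have hU_mem : ∀ D' ∈ sDY, U D' ∈ sDX := by
    intro D' hD'
    obtain ⟨hD'Y, hD'c⟩ := (mem_sDY D').mp hD'
    rw [mem_sDX]
    simp only [hUdef]
    have hJs : ((D' ∩ (Y \ X)).image (esn X Y e)) ⊆ X \ Y := hJ'img D'
    refine ⟨?_, by rw [card_image_gfn hJs, hD'c]⟩
    intro a ha
    rw [mem_image_gfn hJs] at ha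
    by_cases h1 : a ∈ X \ Y
    · exact (Finset.mem_sdiff.mp h1).1
    · by_cases h2 : a ∈ Y \ X
      · by_cases h3 : esn X Y e a ∈ (D' ∩ (Y \ X)).image (esn X Y e)
        · rw [gfn_of_right_mem hJs h2 h3] at ha
          have hy := hD'Y ha
          have h4 := esn_mem X Y e h2
          rw [Finset.mem_sdiff] at h4
          exact absurd hy h4.2
        · rw [gfn_of_right_not hJs h2 h3] at ha
          exact absurd
            (Finset.mem_image.mpr ⟨a, Finset.mem_inter.mpr ⟨ha, h2⟩, rfl⟩) h3
      · rw [gfn_of_out h1 h2] at ha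
        have haY := hD'Y ha
        rw [Finset.mem_sdiff] at h2
        push_neg at h2
        exact h2 haY
  have hU_inter : ∀ D' ∈ sDY, (U D') ∩ (X \ Y) = (D' ∩ (Y \ X)).image (esn X Y e) := by
    intro D' hD'
    obtain ⟨hD'Y, hD'c⟩ := (mem_sDY D').mp hD'
    simp only [hUdef]
    have hJs : ((D' ∩ (Y \ X)).image (esn X Y e)) ⊆ X \ Y := hJ'img D'
    ext a
    simp only [Finset.mem_inter]
    constructor
    · rintro ⟨ha1, ha2⟩
      rw [mem_image_gfn hJs] at ha1
      by_cases h3 : a ∈ (D' ∩ (Y \ X)).image (esn X Y e)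
      · exact h3
      · rw [gfn_of_left hJs ha2 h3] at ha1
        have := hD'Y ha1
        rw [Finset.mem_sdiff] at ha2
        exact absurd this ha2.2
    · intro h3
      refine ⟨?_, hJs h3⟩
      rw [mem_image_gfn hJs, gfn_of_mem hJs h3]
      obtain ⟨b, hb, rfl⟩ := Finset.mem_image.mp h3
      rw [efn_esn X Y e (Finset.mem_inter.mp hb).2]
      exact (Finset.mem_inter.mp hb).1
  have hTU : ∀ D' ∈ sDY, T (U D') = D' := by
    intro D' hD'
    have h1 := hU_inter D' hD'
    simp only [hTdef, hGDdef, hgDdef]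
    rw [h1]
    simp only [hUdef]
    exact image_image_gfn (hJ'img D') D'
  have hGE_mem : ∀ D : Finset α, ∀ E ∈ sE D, GD D E ∈ sE (T D) := by
    intro D E hE
    obtain ⟨hDE, hEc⟩ := (mem_sE D E).mp hE
    rw [mem_sE]
    simp only [hTdef, hGDdef, hgDdef]
    exact ⟨Finset.image_subset_image hDE, by rw [card_image_gfn (hJall D), hEc]⟩
  have hGE_mem' : ∀ D : Finset α, ∀ E' ∈ sE (T D), GD D E' ∈ sE D := by
    intro D E' hE'
    obtain ⟨hDE, hEc⟩ := (mem_sE _ E').mp hE'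
    rw [mem_sE]
    constructor
    · have h3 : D = GD D (T D) := (hGDGD D D).symm
      have h4 : GD D (T D) ⊆ GD D E' := by
        simp only [hGDdef]
        exact Finset.image_subset_image hDE
      intro a ha
      exact h4 (h3 ▸ ha)
    · simp only [hGDdef, hgDdef]
      rw [card_image_gfn (hJall D), hEc]
  -- the marginals
  have hfst : π.map Prod.fst = downUpKernel n k X := by
    apply Measure.ext
    intro t ht
    rw [Measure.map_apply measurable_fst ht, pi_apply, kernel_apply X hX t]
    rw [hPdef, Finset.sum_sigma, Finset.mul_sum, ← hsDXdef]
    apply Finset.sum_congr rfl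
    intro D hD
    have h1 : ∀ E ∈ sE D,
        (if ((E : Finset α), GD D E) ∈ Prod.fst ⁻¹' t then (1 : ENNReal) else 0)
          = (if E ∈ t then (1 : ENNReal) else 0) := by
      intro E _
      by_cases hEt : E ∈ t <;> simp [Set.mem_preimage, hEt]
    rw [Finset.sum_congr rfl h1, Finset.sum_boole, hcinv, mul_assoc]
  have hsnd : π.map Prod.snd = downUpKernel n k Y := by
    apply Measure.ext
    intro t ht
    rw [Measure.map_apply measurable_snd ht, pi_apply, kernel_apply Y hY t]
    rw [hPdef, Finset.sum_sigma, ← hsDYdef]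
    have hstep1 : ∀ D ∈ sDX,
        (∑ E ∈ sE D, if ((E : Finset α), GD D E) ∈ Prod.snd ⁻¹' t then (1 : ENNReal) else 0)
          = ∑ E' ∈ sE (T D), (if E' ∈ t then (1 : ENNReal) else 0) := by
      intro D _
      apply Finset.sum_nbij' (GD D) (GD D)
        (hGE_mem D) (hGE_mem' D)
        (fun E _ => hGDGD D E) (fun E' _ => hGDGD D E')
      intro E _
      by_cases hEt : GD D E ∈ t <;> simp [Set.mem_preimage, hEt]
    have hstep2 : (∑ D ∈ sDX, ∑ E' ∈ sE (T D), (if E' ∈ t then (1 : ENNReal) else 0))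
        = ∑ D' ∈ sDY, ∑ E' ∈ sE D', (if E' ∈ t then (1 : ENNReal) else 0) := by
      apply Finset.sum_nbij' T U hT_mem hU_mem hUT hTU
      intro D _
      rfl
    rw [Finset.sum_congr rfl hstep1, hstep2, Finset.mul_sum]
    apply Finset.sum_congr rfl
    intro D' _
    rw [Finset.sum_boole, hcinv, mul_assoc]
  -- the distance formula
  have hdist : ∀ D : Finset α, D ⊆ X → ∀ E : Finset α, D ⊆ E → E.card = n →
      setDist n E (GD D E)
        = ((D ∩ (X \ Y)).filter (fun a => efn X Y e a ∉ E)).card := by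
    intro D hDX E hDE hEc
    have hJs := hJall D
    have h1 : E \ (GD D E) = E.filter (fun a => gfn X Y e (D ∩ (X \ Y)) a ∉ E) := by
      ext a
      simp only [Finset.mem_sdiff, Finset.mem_filter]
      constructor
      · rintro ⟨h2, h3⟩
        refine ⟨h2, fun h4 => h3 ?_⟩
        simp only [hGDdef, hgDdef]
        exact (mem_image_gfn hJs).mpr h4
      · rintro ⟨h2, h3⟩
        refine ⟨h2, fun h4 => h3 ?_⟩
        exact (mem_image_gfn hJs).mp (by simpa only [hGDdef, hgDdef] using h4)
    have h2 : E.filter (fun a => gfn X Y e (D ∩ (X \ Y)) a ∉ E)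
        = (D ∩ (X \ Y)).filter (fun a => efn X Y e a ∉ E) := by
      ext a
      simp only [Finset.mem_filter]
      constructor
      · rintro ⟨haE, hga⟩
        by_cases hxy : a ∈ X \ Y
        · by_cases haJ : a ∈ D ∩ (X \ Y)
          · rw [gfn_of_mem hJs haJ] at hga
            exact ⟨haJ, hga⟩
          · rw [gfn_of_left hJs hxy haJ] at hga
            exact absurd haE hga
        · by_cases hyx : a ∈ Y \ X
          · by_cases hb : esn X Y e a ∈ D ∩ (X \ Y)
            · rw [gfn_of_right_mem hJs hyx hb] at hga
              exact absurd (hDE (Finset.mem_inter.mp hb).1) hga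
            · rw [gfn_of_right_not hJs hyx hb] at hga
              exact absurd haE hga
          · rw [gfn_of_out hxy hyx] at hga
            exact absurd haE hga
      · rintro ⟨haJ, hef⟩
        refine ⟨hDE (Finset.mem_inter.mp haJ).1, ?_⟩
        rw [gfn_of_mem hJs haJ]
        exact hef
    have h3 := Finset.card_sdiff_add_card_inter E (GD D E)
    rw [h1, h2] at h3
    show n - (E ∩ GD D E).card = _
    omega
  -- pointwise bound
  have hboundpt : ∀ p ∈ P, setDist n p.2 (GD p.1 p.2) ≤ d := by
    intro p hp
    rw [hPdef, Finset.mem_sigma] at hp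
    obtain ⟨hp1, hp2⟩ := hp
    obtain ⟨hDX, hDc⟩ := (mem_sDX p.1).mp hp1
    obtain ⟨hDE, hEc⟩ := (mem_sE p.1 p.2).mp hp2
    rw [hdist p.1 hDX p.2 hDE hEc]
    calc ((p.1 ∩ (X \ Y)).filter (fun a => efn X Y e a ∉ p.2)).card
        ≤ (p.1 ∩ (X \ Y)).card := Finset.card_filter_le _ _
      _ ≤ (X \ Y).card := Finset.card_le_card Finset.inter_subset_right
      _ = d := hdXY
  -- the expected distance, as a natural number sum
  have hsum : (∑ p ∈ P, setDist n p.2 (GD p.1 p.2))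
      = (d * (cD - Nat.choose (n - 1) (n - k))) * Nat.choose (M - 1) k := by
    rw [hPdef, Finset.sum_sigma]
    have hinner : ∀ D ∈ sDX, (∑ E ∈ sE D, setDist n E (GD D E))
        = (D ∩ (X \ Y)).card * Nat.choose (M - 1) k := by
      intro D hD
      obtain ⟨hDX, hDc⟩ := (mem_sDX D).mp hD
      have h1 : ∀ E ∈ sE D, setDist n E (GD D E)
          = ((D ∩ (X \ Y)).filter (fun a => efn X Y e a ∉ E)).card := by
        intro E hE
        obtain ⟨hDE, hEc⟩ := (mem_sE D E).mp hE
        exact hdist D hDX E hDE hEc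
      rw [Finset.sum_congr rfl h1]
      have h2 : ∀ E ∈ sE D, ((D ∩ (X \ Y)).filter (fun a => efn X Y e a ∉ E)).card
          = ∑ a ∈ D ∩ (X \ Y), if efn X Y e a ∉ E then 1 else 0 := by
        intro E _
        rw [Finset.sum_boole, Nat.cast_id]
      rw [Finset.sum_congr rfl h2, Finset.sum_comm]
      have h3 : ∀ a ∈ D ∩ (X \ Y), (∑ E ∈ sE D, if efn X Y e a ∉ E then 1 else 0)
          = Nat.choose (M - 1) k := by
        intro a ha
        rw [Finset.sum_boole, Nat.cast_id]
        have h4 : (sE D).filter (fun E => efn X Y e a ∉ E)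
            = (Finset.univ.powersetCard n).filter (fun E => D ⊆ E ∧ efn X Y e a ∉ E) := by
          rw [hsEdef, Finset.filter_filter]
        have h5 : efn X Y e a ∉ D := by
          intro hcontra
          have h6 := efn_mem X Y e ((hJall D) ha)
          rw [Finset.mem_sdiff] at h6
          exact h6.2 (hDX hcontra)
        rw [h4, card_supersets_avoid n D (by omega) _ h5, hDc]
        congr 1 <;> omega
      rw [Finset.sum_congr rfl h3, Finset.sum_const, smul_eq_mul]
    rw [Finset.sum_congr rfl hinner, ← Finset.sum_mul]
    congr 1
    have h7 : ∀ D ∈ sDX, (D ∩ (X \ Y)).card = ∑ x ∈ X \ Y, if x ∈ D then 1 else 0 := by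
      intro D _
      rw [Finset.sum_boole, Nat.cast_id, Finset.inter_comm D, ← Finset.filter_mem_eq_inter]
    rw [Finset.sum_congr rfl h7, Finset.sum_comm]
    have h8 : ∀ x ∈ X \ Y, (∑ D ∈ sDX, if x ∈ D then 1 else 0)
        = cD - Nat.choose (n - 1) (n - k) := by
      intro x hx
      rw [Finset.sum_boole, Nat.cast_id, hsDXdef]
      rw [card_subsets_mem (n - k) X x ((Finset.mem_sdiff.mp hx).1), hX, hcDdef]
    rw [Finset.sum_congr rfl h8, Finset.sum_const, smul_eq_mul, hdXY]
  -- the integral as a finite sum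
  have hint : (∫ q, (setDist n q.1 q.2 : ℝ) ∂π)
      = (c.toReal)⁻¹ * ∑ p ∈ P, (setDist n p.2 (GD p.1 p.2) : ℝ) := by
    rw [hπdef, integral_smul_measure,
      integral_finset_sum_measure (fun p _ => Integrable.of_finite)]
    rw [ENNReal.toReal_inv, smul_eq_mul]
    congr 1
    apply Finset.sum_congr rfl
    intro p _
    rw [integral_dirac]
  refine ⟨⟨π, hprob, hfst, hsnd, ?_⟩, ⟨π, hprob, hfst, hsnd, ?_⟩⟩
  · -- almost sure bound
    rw [ae_iff]
    have hz : π {a : Finset α × Finset α | ¬ setDist n a.1 a.2 ≤ d} = 0 := by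
      rw [pi_apply]
      convert mul_zero (c⁻¹) using 2
      apply Finset.sum_eq_zero
      intro p hp
      apply if_neg
      intro hc
      rw [Set.mem_setOf_eq] at hc
      exact hc (hboundpt p hp)
    exact hz
  · -- expected value bound
    rw [hint]
    rw [← Nat.cast_sum, hsum]
    have hble : Nat.choose (n - 1) (n - k) ≤ cD := by
      rw [hcDdef]
      exact Nat.choose_le_choose _ (by omega)
    have idA : k * cD = n * Nat.choose (n - 1) (n - k) := by
      have h := choose_ratio (M := n) (k := n - k) hn1 (by omega)
      have h2 : n - (n - k) = k := by omega
      rw [h2] at h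
      rw [hcDdef]
      exact h
    have idB : (M - k) * cE = M * Nat.choose (M - 1) k := by
      have h := choose_ratio (M := M) (k := k) (by omega) (by omega)
      rw [hcEdef]
      exact h
    have hNr : (N : ℝ) - ((n - k : ℕ) : ℝ) = (M : ℝ) := by
      rw [hMdef, Nat.cast_sub (by omega : n - k ≤ N)]
    rw [hNr]
    have hctr : c.toReal = ((cD : ℝ) * (cE : ℝ)) := by
      rw [hcdef, ENNReal.toReal_natCast, Nat.cast_mul]
    rw [hctr]
    have hn0 : (0:ℝ) < n := by positivity
    have hM0 : (0:ℝ) < M := by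
      have : 0 < M := by omega
      exact_mod_cast this
    have ha0 : (0:ℝ) < cD := by exact_mod_cast hcD0
    have hc20 : (0:ℝ) < cE := by exact_mod_cast hcE0
    have idA' : (k : ℝ) * cD = (n : ℝ) * ((n - 1).choose (n - k) : ℝ) := by
      exact_mod_cast idA
    have idB' : ((M : ℝ) - k) * cE = (M : ℝ) * ((M - 1).choose k : ℝ) := by
      have := congrArg (Nat.cast : ℕ → ℝ) idB
      push_cast [Nat.cast_sub (show k ≤ M by omega)] at this
      exact this
    have e1 : 1 - (k : ℝ)/n = ((cD : ℝ) - ((n - 1).choose (n - k) : ℝ))/(cD : ℝ) := by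
      rw [eq_div_iff ha0.ne']
      field_simp
      linarith [idA']
    have e2 : 1 - (k : ℝ)/M = (((M - 1).choose k : ℝ))/(cE : ℝ) := by
      rw [eq_div_iff hc20.ne']
      field_simp
      linarith [idB']
    apply le_of_eq
    rw [e1, e2]
    push_cast [Nat.cast_sub hble]
    field_simp
end
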